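/- arXiv:2505.08408 — 4 statements merged into one kernel-verified Lean document; each statement's English description precedes it below -/
import Mathlib

section
/- If u ∈ ℝ^n is not E-Pareto critical (i.e., there exists d with λ(u, d) < 0), then the steepest descent direction satisfies ϑ(u) ≠ 0 and λ(u, ϑ(u)) < −‖ϑ(u)‖²/2 < 0. -/
open Pointwise


open scoped RealInnerProductSpace

/-- `λ(u, d) := sup { ⟨JΦ(u) d, v⟩ : v ∈ V }`. -/
noncomputable def lam {n m : ℕ}
    (JΦ : EuclideanSpace ℝ (Fin n) → (EuclideanSpace ℝ (Fin n) →L[ℝ] EuclideanSpace ℝ (Fin m)))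
    (V : Set (EuclideanSpace ℝ (Fin m)))
    (u d : EuclideanSpace ℝ (Fin n)) : ℝ :=
  sSup ((fun v => ⟪JΦ u d, v⟫) '' V)

lemma lam_zero {n m : ℕ}
    (JΦ : EuclideanSpace ℝ (Fin n) → (EuclideanSpace ℝ (Fin n) →L[ℝ] EuclideanSpace ℝ (Fin m)))
    (V : Set (EuclideanSpace ℝ (Fin m))) (hVne : V.Nonempty)
    (u : EuclideanSpace ℝ (Fin n)) : lam JΦ V u 0 = 0 := by
  have : (fun v => ⟪(JΦ u) (0 : EuclideanSpace ℝ (Fin n)), v⟫) '' V = {(0:ℝ)} := by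
    have : (fun v : EuclideanSpace ℝ (Fin m) => ⟪(JΦ u) (0 : EuclideanSpace ℝ (Fin n)), v⟫)
        = fun _ => (0:ℝ) := by
      ext v; simp
    rw [this]
    exact Set.Nonempty.image_const hVne 0
  rw [lam, this, csSup_singleton]

lemma lam_smul {n m : ℕ}
    (JΦ : EuclideanSpace ℝ (Fin n) → (EuclideanSpace ℝ (Fin n) →L[ℝ] EuclideanSpace ℝ (Fin m)))
    (V : Set (EuclideanSpace ℝ (Fin m)))
    (u d : EuclideanSpace ℝ (Fin n)) {t : ℝ} (ht : 0 ≤ t) :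
    lam JΦ V u (t • d) = t * lam JΦ V u d := by
  have himg : (fun v => ⟪(JΦ u) (t • d), v⟫) '' V
      = t • ((fun v => ⟪(JΦ u) d, v⟫) '' V) := by
    rw [← Set.image_smul, Set.image_image]
    congr 1
    ext v
    simp [map_smul, real_inner_smul_left, Finset.mul_sum, mul_assoc]
  rw [lam, himg, Real.sSup_smul_of_nonneg ht, smul_eq_mul, lam]

/-- if `u` is not E-Pareto critical (∃ d, λ(u,d) < 0), then the steepest
descent direction `ϑ(u)` satisfies `ϑ(u) ≠ 0` and `λ(u, ϑ(u)) < -‖ϑ(u)‖²/2 < 0`. -/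
theorem steepest_descent_noncritical {n m : ℕ}
    (Φ : EuclideanSpace ℝ (Fin n) → EuclideanSpace ℝ (Fin m))
    (JΦ : EuclideanSpace ℝ (Fin n) → (EuclideanSpace ℝ (Fin n) →L[ℝ] EuclideanSpace ℝ (Fin m)))
    (hdiff : ∀ u, HasFDerivAt Φ (JΦ u) u)
    (V : Set (EuclideanSpace ℝ (Fin m))) (hVcpt : IsCompact V) (hVne : V.Nonempty)
    (u ϑu : EuclideanSpace ℝ (Fin n))
    (hmin : ∀ d, lam JΦ V u ϑu + ‖ϑu‖ ^ 2 / 2 ≤ lam JΦ V u d + ‖d‖ ^ 2 / 2)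
    (hnc : ∃ d, lam JΦ V u d < 0) :
    ϑu ≠ 0 ∧ lam JΦ V u ϑu < -(‖ϑu‖ ^ 2 / 2) ∧ -(‖ϑu‖ ^ 2 / 2) < 0 := by
  obtain ⟨d, hd⟩ := hnc
  have hd0 : d ≠ 0 := by
    rintro rfl
    rw [lam_zero JΦ V hVne] at hd
    exact lt_irrefl 0 hd
  have hnd : (0:ℝ) < ‖d‖ ^ 2 := pow_pos (norm_pos_iff.mpr hd0) 2
  set t : ℝ := -lam JΦ V u d / ‖d‖ ^ 2 with ht_def
  have ht : 0 < t := div_pos (by linarith) hnd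
  have hval : lam JΦ V u (t • d) + ‖t • d‖ ^ 2 / 2 < 0 := by
    rw [lam_smul JΦ V u d ht.le, norm_smul]
    have : (‖t‖ * ‖d‖) ^ 2 = t ^ 2 * ‖d‖ ^ 2 := by
      rw [mul_pow, Real.norm_eq_abs, sq_abs]
    rw [this, ht_def]
    have h2 : -lam JΦ V u d / ‖d‖ ^ 2 * lam JΦ V u d
        + (-lam JΦ V u d / ‖d‖ ^ 2) ^ 2 * ‖d‖ ^ 2 / 2
        = -((lam JΦ V u d)^2 / ‖d‖^2 / 2) := by
      field_simp
      ring
    rw [h2]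
    have h3 : (0:ℝ) < (lam JΦ V u d)^2 := by nlinarith
    have h4 : (0:ℝ) < (lam JΦ V u d)^2 / ‖d‖^2 / 2 := div_pos (div_pos h3 hnd) two_pos
    linarith
  have hM : lam JΦ V u ϑu + ‖ϑu‖ ^ 2 / 2 < 0 := lt_of_le_of_lt (hmin (t • d)) hval
  have hϑ0 : ϑu ≠ 0 := by
    rintro rfl
    rw [lam_zero JΦ V hVne] at hM
    simp at hM
  refine ⟨hϑ0, by linarith, ?_⟩
  have : (0:ℝ) < ‖ϑu‖ ^ 2 := pow_pos (norm_pos_iff.mpr hϑ0) 2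
  linarith
end

section
/- (Sufficient descent property of the three-term PRP direction.) Suppose λ(x, ϑ(x)) < 0 and let β ≥ 0, d⁻ ∈ ℝ^n be arbitrary. Define d := ϑ(x) + β·d⁻ − β·(|λ(x, d⁻)| / λ(x, ϑ(x)))·ϑ(x). Then λ(x, d) ≤ λ(x, ϑ(x)) < 0. -/
open scoped RealInnerProductSpace

lemma lam_bddAbove {n m : ℕ}
    (JΦ : EuclideanSpace ℝ (Fin n) → (EuclideanSpace ℝ (Fin n) →L[ℝ] EuclideanSpace ℝ (Fin m)))
    (V : Set (EuclideanSpace ℝ (Fin m))) (hVcpt : IsCompact V)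
    (u d : EuclideanSpace ℝ (Fin n)) :
    BddAbove ((fun v => ⟪JΦ u d, v⟫) '' V) := by
  have hc : Continuous fun v : EuclideanSpace ℝ (Fin m) => ⟪JΦ u d, v⟫ :=
    continuous_const.inner continuous_id
  exact (hVcpt.image hc).bddAbove

lemma lam_le_of_forall {n m : ℕ}
    (JΦ : EuclideanSpace ℝ (Fin n) → (EuclideanSpace ℝ (Fin n) →L[ℝ] EuclideanSpace ℝ (Fin m)))
    (V : Set (EuclideanSpace ℝ (Fin m))) (hVne : V.Nonempty)
    (u d : EuclideanSpace ℝ (Fin n)) (c : ℝ)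
    (h : ∀ v ∈ V, ⟪JΦ u d, v⟫ ≤ c) : lam JΦ V u d ≤ c := by
  apply csSup_le (hVne.image _)
  rintro y ⟨v, hv, rfl⟩; exact h v hv

lemma le_lam {n m : ℕ}
    (JΦ : EuclideanSpace ℝ (Fin n) → (EuclideanSpace ℝ (Fin n) →L[ℝ] EuclideanSpace ℝ (Fin m)))
    (V : Set (EuclideanSpace ℝ (Fin m))) (hVcpt : IsCompact V)
    (u d : EuclideanSpace ℝ (Fin n)) {v : EuclideanSpace ℝ (Fin m)} (hv : v ∈ V) :
    ⟪JΦ u d, v⟫ ≤ lam JΦ V u d :=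
  le_csSup (lam_bddAbove JΦ V hVcpt u d) ⟨v, hv, rfl⟩

/-- sufficient descent property of the three-term PRP direction:
if `λ(x, ϑx) < 0` and `β ≥ 0`, then
`λ(x, ϑx + β d⁻ − β(|λ(x,d⁻)|/λ(x,ϑx)) ϑx) ≤ λ(x, ϑx) < 0`. -/
theorem three_term_PRP_sufficient_descent {n m : ℕ}
    (Φ : EuclideanSpace ℝ (Fin n) → EuclideanSpace ℝ (Fin m))
    (JΦ : EuclideanSpace ℝ (Fin n) → (EuclideanSpace ℝ (Fin n) →L[ℝ] EuclideanSpace ℝ (Fin m)))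
    (hdiff : ∀ u, HasFDerivAt Φ (JΦ u) u)
    (V : Set (EuclideanSpace ℝ (Fin m))) (hVcpt : IsCompact V) (hVne : V.Nonempty)
    (x ϑx dprev : EuclideanSpace ℝ (Fin n)) (β : ℝ) (hβ : 0 ≤ β)
    (hneg : lam JΦ V x ϑx < 0) :
    lam JΦ V x (ϑx + β • dprev - (β * |lam JΦ V x dprev| / lam JΦ V x ϑx) • ϑx)
      ≤ lam JΦ V x ϑx ∧ lam JΦ V x ϑx < 0 := by
  refine ⟨?_, hneg⟩
  set c : ℝ := β * |lam JΦ V x dprev| / lam JΦ V x ϑx with hc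
  have hcle : c ≤ 0 :=
    div_nonpos_of_nonneg_of_nonpos (by positivity) hneg.le
  have key : ∀ v ∈ V,
      ⟪JΦ x (ϑx + β • dprev - c • ϑx), v⟫ ≤ lam JΦ V x ϑx := by
    intro v hv
    have hexp : ⟪JΦ x (ϑx + β • dprev - c • ϑx), v⟫
        = ⟪JΦ x ϑx, v⟫ + β * ⟪JΦ x dprev, v⟫ - c * ⟪JΦ x ϑx, v⟫ := by
      simp [map_add, map_sub, map_smul, inner_add_left, inner_sub_left,
        inner_smul_left, real_inner_smul_left]
    rw [hexp]
    have h1 : ⟪JΦ x ϑx, v⟫ ≤ lam JΦ V x ϑx := le_lam JΦ V hVcpt x ϑx hv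
    have h2 : ⟪JΦ x dprev, v⟫ ≤ lam JΦ V x dprev := le_lam JΦ V hVcpt x dprev hv
    have h3 : β * ⟪JΦ x dprev, v⟫ ≤ β * |lam JΦ V x dprev| :=
      mul_le_mul_of_nonneg_left (h2.trans (le_abs_self _)) hβ
    have h4 : -(c * ⟪JΦ x ϑx, v⟫) ≤ -(c * lam JΦ V x ϑx) := by
      have := mul_le_mul_of_nonpos_left h1 hcle
      linarith
    have h5 : c * lam JΦ V x ϑx = β * |lam JΦ V x dprev| := by
      rw [hc, div_mul_cancel₀ _ hneg.ne]
    nlinarith [h1, h3, h4, h5]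
  exact lam_le_of_forall JΦ V hVne x _ _ key
end

section
/- (Conjugate parameter bound via Lipschitz continuity.) Assume JΦ is L-Lipschitz, ‖ϑ(x^k)‖ ≤ θ, and |λ(x^{k−1}, ϑ(x^{k−1}))| > η²/2 for some η > 0. Then the PRP parameter β_k := max{0, (−λ(x^k, ϑ(x^k)) + λ(x^{k−1}, ϑ(x^k))) / (−λ(x^{k−1}, ϑ(x^{k−1})))} satisfies |β_k| ≤ (2Lθ/η²)·‖x^k − x^{k−1}‖. -/
open scoped RealInnerProductSpace

lemma lam_le_add {n m : ℕ}
    (JΦ : EuclideanSpace ℝ (Fin n) → (EuclideanSpace ℝ (Fin n) →L[ℝ] EuclideanSpace ℝ (Fin m)))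
    (V : Set (EuclideanSpace ℝ (Fin m))) (hVcpt : IsCompact V) (hVne : V.Nonempty)
    (hVball : ∀ v ∈ V, ‖v‖ ≤ 1) (u w d : EuclideanSpace ℝ (Fin n)) :
    lam JΦ V u d ≤ lam JΦ V w d + ‖JΦ u - JΦ w‖ * ‖d‖ := by
  have hcont : Continuous fun v : EuclideanSpace ℝ (Fin m) => ⟪JΦ w d, v⟫ :=
    continuous_const.inner continuous_id
  have hbdd : BddAbove ((fun v => ⟪JΦ w d, v⟫) '' V) :=
    (hVcpt.image hcont).bddAbove
  apply csSup_le (hVne.image _)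
  rintro x ⟨v, hv, rfl⟩
  have h1 : ⟪JΦ w d, v⟫ ≤ lam JΦ V w d := le_csSup hbdd ⟨v, hv, rfl⟩
  have h2 : ⟪JΦ u d - JΦ w d, v⟫ ≤ ‖JΦ u - JΦ w‖ * ‖d‖ := by
    calc ⟪JΦ u d - JΦ w d, v⟫ ≤ ‖JΦ u d - JΦ w d‖ * ‖v‖ := real_inner_le_norm _ _
    _ ≤ ‖(JΦ u - JΦ w) d‖ * 1 := by
        apply mul_le_mul_of_nonneg_left (hVball v hv) (by positivity)
    _ ≤ ‖JΦ u - JΦ w‖ * ‖d‖ := by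
        rw [mul_one]; exact (JΦ u - JΦ w).le_opNorm d
  have : ⟪JΦ u d, v⟫ = ⟪JΦ w d, v⟫ + ⟪JΦ u d - JΦ w d, v⟫ := by
    rw [← inner_add_left]; congr 1; abel
  linarith

/-- conjugate parameter bound via Lipschitz continuity:
`|β_k| ≤ (2Lθ/η²)·‖x^k − x^{k−1}‖`. -/
theorem PRP_parameter_lipschitz_bound {n m : ℕ} (L θ η : ℝ) (hθ : 0 < θ) (hη : 0 < η)
    (Φ : EuclideanSpace ℝ (Fin n) → EuclideanSpace ℝ (Fin m))
    (JΦ : EuclideanSpace ℝ (Fin n) → (EuclideanSpace ℝ (Fin n) →L[ℝ] EuclideanSpace ℝ (Fin m)))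
    (hdiff : ∀ u, HasFDerivAt Φ (JΦ u) u)
    (hLip : ∀ u w, ‖JΦ u - JΦ w‖ ≤ L * ‖u - w‖)
    (V : Set (EuclideanSpace ℝ (Fin m))) (hVcpt : IsCompact V) (hVne : V.Nonempty)
    (hVball : ∀ v ∈ V, ‖v‖ ≤ 1)
    (ϑ : EuclideanSpace ℝ (Fin n) → EuclideanSpace ℝ (Fin n))
    (xk xk1 : EuclideanSpace ℝ (Fin n))
    (hθb : ‖ϑ xk‖ ≤ θ)
    (hneg : lam JΦ V xk1 (ϑ xk1) < 0)
    (hlow : η ^ 2 / 2 < |lam JΦ V xk1 (ϑ xk1)|) :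
    |max 0 ((-lam JΦ V xk (ϑ xk) + lam JΦ V xk1 (ϑ xk)) / (-lam JΦ V xk1 (ϑ xk1)))|
      ≤ 2 * L * θ / η ^ 2 * ‖xk - xk1‖ := by
  set d := ϑ xk
  set a := lam JΦ V xk1 (ϑ xk1) with ha
  set N := -lam JΦ V xk d + lam JΦ V xk1 d with hN
  have haa : η ^ 2 / 2 < -a := by rwa [abs_of_neg hneg] at hlow
  have hapos : 0 < -a := lt_trans (by positivity) haa
  rw [abs_of_nonneg (le_max_left _ _)]
  by_cases hzero : ‖xk - xk1‖ = 0
  · have hx : xk = xk1 := by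
      have := norm_sub_eq_zero_iff.mp hzero; exact this
    have hN0 : N = 0 := by simp [hN, hx]
    rw [hzero, hN0]
    simp
  · have hcpos : 0 < ‖xk - xk1‖ := lt_of_le_of_ne (norm_nonneg _) (Ne.symm hzero)
    have hL : 0 ≤ L := by
      have h := (norm_nonneg (JΦ xk - JΦ xk1)).trans (hLip xk xk1)
      nlinarith [h, hcpos]
    have hNb : N ≤ L * ‖xk - xk1‖ * θ := by
      have h1 := lam_le_add JΦ V hVcpt hVne hVball xk1 xk d
      have h2 : ‖JΦ xk1 - JΦ xk‖ ≤ L * ‖xk - xk1‖ := by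
        rw [norm_sub_rev xk xk1] at *
        exact hLip xk1 xk
      have h3 : ‖JΦ xk1 - JΦ xk‖ * ‖d‖ ≤ L * ‖xk - xk1‖ * θ :=
        mul_le_mul h2 hθb (norm_nonneg _) (by positivity)
      simp only [hN]
      linarith
    have hRHS : 0 ≤ 2 * L * θ / η ^ 2 * ‖xk - xk1‖ := by positivity
    refine max_le hRHS ?_
    rw [div_le_iff₀ hapos]
    have hη2 : (0:ℝ) < η ^ 2 := by positivity
    have heq : 2 * L * θ / η ^ 2 * ‖xk - xk1‖ * -a = 2 * L * θ * ‖xk - xk1‖ * -a / η ^ 2 := by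
      ring
    rw [heq, le_div_iff₀ hη2]
    nlinarith [mul_le_mul_of_nonneg_right hNb hη2.le,
      mul_nonneg (mul_nonneg (mul_nonneg hL hθ.le) hcpos.le)
        (by linarith : (0:ℝ) ≤ -a - η ^ 2 / 2)]
end

section
/- (Unit-vector telescoping bound.) Let ρ^k ∈ ℝ^n with ‖ρ^k‖ = ‖ρ^{k−1}‖ = 1, β ≥ 0, t ≥ 0, and suppose ρ^k = w + βt·ρ^{k−1} for some w ∈ ℝ^n. Then ‖ρ^k − ρ^{k−1}‖ ≤ 2‖w‖. -/
/-- unit-vector telescoping bound: if `‖ρk‖ = ‖ρk1‖ = 1`, `β, t ≥ 0` and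
`ρk = w + βt·ρk1`, then `‖ρk − ρk1‖ ≤ 2‖w‖`. -/
theorem unit_vector_telescoping_bound {n : ℕ}
    (ρk ρk1 w : EuclideanSpace ℝ (Fin n)) (β t : ℝ)
    (hρk : ‖ρk‖ = 1) (hρk1 : ‖ρk1‖ = 1) (hβ : 0 ≤ β) (ht : 0 ≤ t)
    (hrec : ρk = w + (β * t) • ρk1) :
    ‖ρk - ρk1‖ ≤ 2 * ‖w‖ := by
  set c := β * t with hcdef
  have hc : 0 ≤ c := mul_nonneg hβ ht
  have hw : w = ρk - c • ρk1 := by rw [hrec]; abel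
  have hsq : ‖ρk - c • ρk1‖ ^ 2 = ‖c • ρk - ρk1‖ ^ 2 := by
    rw [← real_inner_self_eq_norm_sq, ← real_inner_self_eq_norm_sq]
    simp only [inner_sub_left, inner_sub_right, inner_smul_left, inner_smul_right,
      real_inner_self_eq_norm_sq, hρk, hρk1, RCLike.ofReal_real_eq_id, id]
    rw [real_inner_comm ρk1 ρk]
    ring
  have h1 : ‖ρk - c • ρk1‖ = ‖c • ρk - ρk1‖ := by
    nlinarith [norm_nonneg (ρk - c • ρk1), norm_nonneg (c • ρk - ρk1), hsq]
  have hdecomp : (1 + c) • (ρk - ρk1) = (ρk - c • ρk1) + (c • ρk - ρk1) := by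
    module
  have h2 : (1 + c) * ‖ρk - ρk1‖ ≤ 2 * ‖w‖ := by
    calc (1 + c) * ‖ρk - ρk1‖ = ‖(1 + c) • (ρk - ρk1)‖ := by
            rw [norm_smul, Real.norm_eq_abs, abs_of_nonneg (by linarith)]
      _ = ‖(ρk - c • ρk1) + (c • ρk - ρk1)‖ := by rw [hdecomp]
      _ ≤ ‖ρk - c • ρk1‖ + ‖c • ρk - ρk1‖ := norm_add_le _ _
      _ = 2 * ‖w‖ := by rw [← h1, hw]; ring
  nlinarith [norm_nonneg (ρk - ρk1)]
end
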